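/- Let d ≥ 2 and let P be a tuple of n points in [0,1)^d that forms a chain for the componentwise order, i.e., for any two points x, y of P we have x ≤ y or y ≤ x componentwise. If either (d = 2 and n ≥ 4) or (d ≥ 3 and n ≥ 3), then d*(P) ≥ 1/n. -/

import Mathlib

open Finset

noncomputable section

open scoped Classical

/-- Number of points of the tuple `P` lying in the open anchored box `[0,q)`. -/
def openCount {n d : ℕ} (P : Fin n → Fin d → ℝ) (q : Fin d → ℝ) : ℕ :=
  (Finset.univ.filter (fun i : Fin n => ∀ j, P i j < q j)).card

/-- Number of points of the tuple `P` lying in the closed anchored box `[0,q]`. -/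
def closedCount {n d : ℕ} (P : Fin n → Fin d → ℝ) (q : Fin d → ℝ) : ℕ :=
  (Finset.univ.filter (fun i : Fin n => ∀ j, P i j ≤ q j)).card

/-- Open local discrepancy `δ(P,q) = ∏ q_j − #{i : x⁽ⁱ⁾ ∈ [0,q)}/n`. -/
def openDisc {n d : ℕ} (P : Fin n → Fin d → ℝ) (q : Fin d → ℝ) : ℝ :=
  (∏ j, q j) - (openCount P q : ℝ) / n

/-- Closed local discrepancy `δ̄(P,q) = #{i : x⁽ⁱ⁾ ∈ [0,q]}/n − ∏ q_j`. -/
def closedDisc {n d : ℕ} (P : Fin n → Fin d → ℝ) (q : Fin d → ℝ) : ℝ :=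
  (closedCount P q : ℝ) / n - ∏ j, q j

/-- `max(δ(P,q), δ̄(P,q))`. -/
def localDisc {n d : ℕ} (P : Fin n → Fin d → ℝ) (q : Fin d → ℝ) : ℝ :=
  max (openDisc P q) (closedDisc P q)

/-- The L∞ star discrepancy `d*(P) = sup_{q ∈ [0,1]^d} max(δ(P,q), δ̄(P,q))`. -/
def starDisc {n d : ℕ} (P : Fin n → Fin d → ℝ) : ℝ :=
  sSup {r : ℝ | ∃ q : Fin d → ℝ, (∀ j, q j ∈ Set.Icc (0:ℝ) 1) ∧ r = localDisc P q}

/-!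
Let `a ≤ b` be the two smallest points of the chain. If some coordinate satisfies `b_j ≥ 2/n`,
the box of volume `b_j` cut out by `x_j < b_j` contains no point except `a`, so its open local
discrepancy is at least `2/n - 1/n`. Otherwise the closed box `[0, b]` contains both `a` and `b`
while its volume is at most `(2/n)^d ≤ 1/n`, so its closed local discrepancy is at least `1/n`.
-/

lemma exists_forall_le_of_total {ι α : Type*} [Preorder α] (f : ι → α)
    (htotal : ∀ i k, f i ≤ f k ∨ f k ≤ f i) {s : Finset ι} (hs : s.Nonempty) :
    ∃ a ∈ s, ∀ i ∈ s, f a ≤ f i := by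
  obtain ⟨a, has, hmin⟩ := s.exists_minimalFor f hs
  exact ⟨a, has, fun i hi => (htotal a i).elim id fun hia => hmin hi hia⟩

lemma exists_two_smallest_of_total {ι α : Type*} [DecidableEq ι] [Preorder α] (f : ι → α)
    (htotal : ∀ i k, f i ≤ f k ∨ f k ≤ f i) {s : Finset ι} (hs : 1 < #s) :
    ∃ a ∈ s, ∃ b ∈ s, a ≠ b ∧ f a ≤ f b ∧ ∀ i ∈ s, i ≠ a → f b ≤ f i := by
  obtain ⟨a, has, ha⟩ := exists_forall_le_of_total f htotal (s := s) (card_pos.1 (by omega))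
  obtain ⟨b, hb, hb_min⟩ := exists_forall_le_of_total f htotal (s := s.erase a)
    (card_pos.1 (by rw [card_erase_of_mem has]; omega))
  obtain ⟨hba, hbs⟩ := mem_erase.1 hb
  exact ⟨a, has, b, hbs, hba.symm, ha b hbs,
    fun i hi hia => hb_min i (mem_erase.2 ⟨hia, hi⟩)⟩

lemma two_div_pow_le_one_div {d n : ℕ} (h : (d = 2 ∧ 4 ≤ n) ∨ (3 ≤ d ∧ 3 ≤ n)) :
    (2 / n : ℝ) ^ d ≤ 1 / n := by
  rcases h with ⟨rfl, hn⟩ | ⟨hd, hn⟩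
  · have hn : (4 : ℝ) ≤ n := by exact_mod_cast hn
    rw [div_pow, div_le_div_iff₀ (by positivity) (by positivity)]
    nlinarith
  · have hn : (3 : ℝ) ≤ n := by exact_mod_cast hn
    calc (2 / n : ℝ) ^ d ≤ (2 / n) ^ 3 :=
          pow_le_pow_of_le_one (by positivity) (by rw [div_le_one₀ (by positivity)]; linarith) hd
      _ ≤ 1 / n := by
          rw [div_pow, div_le_div_iff₀ (by positivity) (by positivity)]
          nlinarith [mul_le_mul hn hn (by norm_num) (by positivity)]

section Discrepancy

variable {n d : ℕ} (P : Fin n → Fin d → ℝ)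

lemma localDisc_le_starDisc {q : Fin d → ℝ} (hq : ∀ j, q j ∈ Set.Icc (0 : ℝ) 1) :
    localDisc P q ≤ starDisc P := by
  refine le_csSup ⟨1, ?_⟩ ⟨q, hq, rfl⟩
  rintro _ ⟨q, hq, rfl⟩
  have hprod_nonneg : 0 ≤ ∏ j, q j := prod_nonneg fun j _ => (hq j).1
  have hprod_le : ∏ j, q j ≤ 1 := prod_le_one (fun j _ => (hq j).1) fun j _ => (hq j).2
  have hclosed : (closedCount P q : ℝ) / n ≤ 1 :=
    div_le_one_of_le₀ (by exact_mod_cast (card_le_univ _).trans_eq (Fintype.card_fin n))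
      n.cast_nonneg
  have hopen : 0 ≤ (openCount P q : ℝ) / n := by positivity
  exact max_le (by unfold openDisc; linarith) (by unfold closedDisc; linarith)

lemma openDisc_le_starDisc {q : Fin d → ℝ} (hq : ∀ j, q j ∈ Set.Icc (0 : ℝ) 1) :
    openDisc P q ≤ starDisc P :=
  (le_max_left _ _).trans (localDisc_le_starDisc P hq)

lemma closedDisc_le_starDisc {q : Fin d → ℝ} (hq : ∀ j, q j ∈ Set.Icc (0 : ℝ) 1) :
    closedDisc P q ≤ starDisc P :=
  (le_max_right _ _).trans (localDisc_le_starDisc P hq)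

lemma openCount_mulSingle_le_one {a : Fin n} {j : Fin d} {c : ℝ}
    (hc : ∀ i, i ≠ a → c ≤ P i j) : openCount P (Pi.mulSingle j c) ≤ 1 := by
  refine (card_le_card fun i hi => mem_singleton.2 ?_).trans (card_singleton a).le
  have hij : P i j < c := by simpa using (mem_filter.1 hi).2 j
  by_contra hia
  exact (hc i hia).not_gt hij

lemma two_le_closedCount {a b : Fin n} (hab : a ≠ b) (hle : P a ≤ P b) :
    2 ≤ closedCount P (P b) := by
  have hsub : {a, b} ⊆ univ.filter fun i => ∀ j, P i j ≤ P b j := by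
    intro i hi
    rcases mem_insert.1 hi with rfl | hi
    · exact mem_filter.2 ⟨mem_univ _, hle⟩
    · obtain rfl := mem_singleton.1 hi
      exact mem_filter.2 ⟨mem_univ _, le_refl (P i)⟩
  exact (card_pair hab).symm.le.trans (card_le_card hsub)

lemma sub_one_div_le_starDisc {a : Fin n} {j : Fin d} {c : ℝ} (hc : c ∈ Set.Icc (0 : ℝ) 1)
    (hc_le : ∀ i, i ≠ a → c ≤ P i j) : c - 1 / n ≤ starDisc P := by
  set q : Fin d → ℝ := Pi.mulSingle j c
  have hq : ∀ k, q k ∈ Set.Icc (0 : ℝ) 1 := by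
    intro k
    rcases eq_or_ne k j with rfl | hkj
    · simpa [q] using hc
    · simp [q, Pi.mulSingle_eq_of_ne hkj]
  have hcount : openCount P q ≤ 1 := openCount_mulSingle_le_one P hc_le
  calc c - 1 / n ≤ c - openCount P q / n := by gcongr; exact_mod_cast hcount
    _ = openDisc P q := by rw [openDisc, Fintype.prod_pi_mulSingle']
    _ ≤ starDisc P := openDisc_le_starDisc P hq

lemma two_div_sub_prod_le_starDisc {a b : Fin n} (hab : a ≠ b) (hle : P a ≤ P b)
    (hb : ∀ j, P b j ∈ Set.Icc (0 : ℝ) 1) : 2 / n - ∏ j, P b j ≤ starDisc P := by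
  have hcount : (2 : ℕ) ≤ closedCount P (P b) := two_le_closedCount P hab hle
  calc 2 / n - ∏ j, P b j ≤ closedCount P (P b) / n - ∏ j, P b j := by
        gcongr; exact_mod_cast hcount
    _ ≤ starDisc P := closedDisc_le_starDisc P hb

end Discrepancy

theorem stmt_1_general {d n : ℕ} (P : Fin n → Fin d → ℝ)
    (hP : ∀ i j, P i j ∈ Set.Ico (0:ℝ) 1)
    (hchain : ∀ i k : Fin n, (∀ j, P i j ≤ P k j) ∨ (∀ j, P k j ≤ P i j))
    (h : (d = 2 ∧ 4 ≤ n) ∨ (3 ≤ d ∧ 3 ≤ n)) :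
    1 / (n : ℝ) ≤ starDisc P := by
  have hn : 1 < #(univ : Finset (Fin n)) := by rw [card_univ, Fintype.card_fin]; omega
  obtain ⟨a, -, b, -, hab, hab_le, hb_min⟩ := exists_two_smallest_of_total P hchain hn
  have hPb : ∀ j, P b j ∈ Set.Icc (0 : ℝ) 1 := fun j => Set.Ico_subset_Icc_self (hP b j)
  by_cases hsmall : ∀ j, P b j < 2 / n
  · have hvol : ∏ j, P b j ≤ (2 / n : ℝ) ^ d :=
      calc ∏ j, P b j ≤ ∏ _j : Fin d, (2 / n : ℝ) :=
            prod_le_prod (fun j _ => (hPb j).1) fun j _ => (hsmall j).le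
        _ = (2 / n : ℝ) ^ d := by rw [prod_const, card_univ, Fintype.card_fin]
    calc 1 / (n : ℝ) = 2 / n - 1 / n := by ring
      _ ≤ 2 / n - ∏ j, P b j := by linarith [two_div_pow_le_one_div h]
      _ ≤ starDisc P := two_div_sub_prod_le_starDisc P hab hab_le hPb
  · obtain ⟨j, hj⟩ := not_forall.1 hsmall
    calc 1 / (n : ℝ) = 2 / n - 1 / n := by ring
      _ ≤ P b j - 1 / n := by linarith [not_lt.1 hj]
      _ ≤ starDisc P := sub_one_div_le_starDisc P (hPb j) fun i hia => hb_min i (mem_univ i) hia j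

/-- If the points of `P ⊆ [0,1)^d` form a chain for the componentwise order and
`d = 2, n ≥ 4` or `d ≥ 3, n ≥ 3`, then `d*(P) ≥ 1/n`. -/
theorem stmt_1 {d n : ℕ} (hd : 2 ≤ d) (P : Fin n → Fin d → ℝ)
    (hP : ∀ i j, P i j ∈ Set.Ico (0:ℝ) 1)
    (hchain : ∀ i k : Fin n, (∀ j, P i j ≤ P k j) ∨ (∀ j, P k j ≤ P i j))
    (h : (d = 2 ∧ 4 ≤ n) ∨ (3 ≤ d ∧ 3 ≤ n)) :
    1 / (n : ℝ) ≤ starDisc P :=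
  stmt_1_general P hP hchain h
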